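/- Fix σ > 0 and let (W, U) be a correlated Brownian motion pair with dynamic correlation r, and let ρ_t denote the correlation of R_t = e^{σW_t} and S_t = e^{σU_t}. For the estimator γ̂_t of Eq. (3) and the corresponding variance estimators σ̂²_{t,W} and σ̂²_{t,U}, if b > 2 and a > 0 (and c is any real), then for each fixed integer t ≥ 1 the ratio 𝔼(γ̂_t) / √( 𝔼(σ̂²_{t,W}) · 𝔼(σ̂²_{t,U}) ) converges to ρ_t as T → ∞. -/

import Mathlib

open MeasureTheory ProbabilityTheory Filter Finset

/-- A standard Brownian motion sampled at the integer times. -/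
structure IsDiscreteBM {Ω : Type*} [MeasureSpace Ω] (X : ℕ → Ω → ℝ) : Prop where
  meas : ∀ t, Measurable (X t)
  init : ∀ᵐ ω ∂(ℙ : Measure Ω), X 0 ω = 0
  incr : ∀ s t : ℕ, s ≤ t →
    Measure.map (fun ω => X t ω - X s ω) (ℙ : Measure Ω) = gaussianReal 0 ((t - s : ℕ) : NNReal)
  indep_incr : ∀ u : ℕ → ℕ, Monotone u →
    iIndepFun
      (fun i ω => X (u (i + 1)) ω - X (u i) ω) (ℙ : Measure Ω)

/-- Independence of two processes (as functions into `ℕ → ℝ`). -/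
def ProcIndep {Ω : Type*} [MeasureSpace Ω] (A B : ℕ → Ω → ℝ) : Prop :=
  IndepFun (fun ω t => A t ω) (fun ω t => B t ω) (ℙ : Measure Ω)

/-- A correlated Brownian motion pair with dynamic correlation `ρ`. -/
structure IsCorrBMPair {Ω : Type*} [MeasureSpace Ω] (ρ : ℕ → ℝ) (X Y : ℕ → Ω → ℝ) : Prop where
  bound : ∀ t, |ρ t| ≤ 1
  bmX : IsDiscreteBM X
  bmY : IsDiscreteBM Y
  rep : ∃ X1 Y1 : ℕ → Ω → ℝ, IsDiscreteBM X1 ∧ IsDiscreteBM Y1 ∧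
    ProcIndep X1 Y ∧ ProcIndep Y1 X ∧
    (∀ t, ∀ᵐ ω ∂(ℙ : Measure Ω),
      X t ω = ρ t * Y t ω + Real.sqrt (1 - ρ t ^ 2) * X1 t ω) ∧
    (∀ t, ∀ᵐ ω ∂(ℙ : Measure Ω),
      Y t ω = ρ t * X t ω + Real.sqrt (1 - ρ t ^ 2) * Y1 t ω)

/-- The Eq. (3) covariance estimator `γ̂_t` for a Geometric Brownian motion pair
`(e^{σW}, e^{σU})`; with `U := W` it is the variance estimator `σ̂²_{t,W}`. -/
noncomputable def gbmGammaEq3 {Ω : Type*} [MeasureSpace Ω] (σ a b c : ℝ) (W U : ℕ → Ω → ℝ)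
    (T t : ℕ) (ω : Ω) : ℝ :=
  Real.exp (-(c * σ ^ 2 * T)) * ∑ k ∈ Finset.Icc 1 T,
    (Real.exp (a * σ ^ 2 * k) *
        ((Real.exp (σ * W t ω) - Real.exp (σ ^ 2 * t / 2))
          * (Real.exp (σ * U t ω) - Real.exp (σ ^ 2 * t / 2)))
      - Real.exp (-(b * σ ^ 2 * k)) *
        ((Real.exp (σ * W k ω) - Real.exp (σ ^ 2 * k / 2))
          * (Real.exp (σ * U k ω) - Real.exp (σ ^ 2 * k / 2))))

/-- The dynamic correlation `ρ_t` of the Geometric Brownian motion pair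
`(e^{σW}, e^{σU})` when `(W,U)` has dynamic correlation `r`. -/
noncomputable def gbmCorr (σ : ℝ) (r : ℕ → ℝ) (t : ℕ) : ℝ :=
  (Real.exp (r t * σ ^ 2 * t) - 1) / (Real.exp (σ ^ 2 * t) - 1)

/-! Each centred product in `γ̂_t` has expectation `γ_k = Cov(e^{σW_k}, e^{σU_k})`, which the
Gaussian moment generating function and the decomposition `W = rU + √(1 - r²) W¹` evaluate to
`e^{σ²k}(e^{r_k σ² k} - 1)` (and to `e^{σ²k}(e^{σ²k} - 1)` for the variances). Hence
`𝔼 γ̂_t = e^{-cσ²T} (A_T γ_t - B_T)` with `A_T = ∑ e^{aσ²k} ≥ T`, while `B_T = ∑ e^{-bσ²k} γ_k`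
stays bounded because `|γ_k| ≤ e^{2σ²k}` and `b > 2`. After dividing by `A_T` (the factor
`e^{-cσ²T}` cancels) the ratio tends to `γ_t / Var(e^{σW_t}) = ρ_t`. -/

open Real Topology

lemma tendsto_sum_Icc_exp_mul_atTop {x : ℝ} (hx : 0 ≤ x) :
    Tendsto (fun T : ℕ => ∑ k ∈ Icc 1 T, exp (x * k)) atTop atTop := by
  refine tendsto_atTop_mono (fun T => ?_) tendsto_natCast_atTop_atTop
  calc (T : ℝ) = ∑ _ ∈ Icc 1 T, (1 : ℝ) := by simp
    _ ≤ _ := sum_le_sum fun k _ => one_le_exp (by positivity)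

lemma summable_exp_neg_mul_mul_of_abs_le {α β : ℝ} (hβα : β < α) {m : ℕ → ℝ}
    (hm : ∀ k : ℕ, |m k| ≤ exp (β * k)) :
    Summable fun k : ℕ => exp (-(α * k)) * m k := by
  refine (summable_exp_nat_mul_iff.mpr (sub_neg.mpr hβα)).of_norm_bounded fun k => ?_
  rw [norm_mul, norm_of_nonneg (exp_pos _).le, Real.norm_eq_abs]
  calc exp (-(α * k)) * |m k| ≤ exp (-(α * k)) * exp (β * k) := by gcongr; exact hm k
    _ = exp (k * (β - α)) := by rw [← exp_add]; ring_nf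

lemma abs_sum_le_tsum_abs {f : ℕ → ℝ} (hf : Summable f) (s : Finset ℕ) :
    |∑ k ∈ s, f k| ≤ ∑' k, |f k| :=
  (abs_sum_le_sum_abs f s).trans (hf.abs.sum_le_tsum s fun _ _ => abs_nonneg _)

lemma abs_exp_sub_exp_le {x y z : ℝ} (hx : x ≤ z) (hy : y ≤ z) : |exp x - exp y| ≤ exp z := by
  have := exp_le_exp.mpr hx
  have := exp_le_exp.mpr hy
  rw [abs_sub_le_iff]
  constructor <;> linarith [exp_pos x, exp_pos y]

lemma tendsto_div_sqrt_mul_self_of_bounded {e A B B' : ℕ → ℝ} {x y C C' : ℝ}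
    (he : ∀ T, 0 < e T) (hA : Tendsto A atTop atTop)
    (hB : ∀ T, |B T| ≤ C) (hB' : ∀ T, |B' T| ≤ C') (hy : 0 < y) :
    Tendsto (fun T => e T * (A T * x - B T) /
      √(e T * (A T * y - B' T) * (e T * (A T * y - B' T)))) atTop (𝓝 (x / y)) := by
  have hdiv : ∀ {D : ℕ → ℝ} {K : ℝ}, (∀ T, |D T| ≤ K) →
      Tendsto (fun T => D T / A T) atTop (𝓝 0) := fun hD =>
    tendsto_bdd_div_atTop_nhds_zero (.of_forall fun T => (abs_le.mp (hD T)).1)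
      (.of_forall fun T => (abs_le.mp (hD T)).2) hA
  have hlim : Tendsto (fun T => (x - B T / A T) / |y - B' T / A T|) atTop (𝓝 (x / y)) := by
    have h := ((tendsto_const_nhds (x := x)).sub (hdiv hB)).div
      ((tendsto_const_nhds (x := y)).sub (hdiv hB')).abs (by simpa using hy.ne')
    simpa [abs_of_pos hy, Pi.div_def] using h
  refine hlim.congr' ?_
  filter_upwards [hA.eventually_gt_atTop 0] with T hAT
  rw [sqrt_mul_self_eq_abs, abs_mul, abs_of_pos (he T), mul_div_mul_left _ _ (he T).ne',
    show A T * x - B T = A T * (x - B T / A T) by field_simp,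
    show A T * y - B' T = A T * (y - B' T / A T) by field_simp,
    abs_mul, abs_of_pos hAT, mul_div_mul_left _ _ hAT.ne']

section GBM

variable {Ω : Type*} [MeasureSpace Ω] {W U : ℕ → Ω → ℝ}

lemma IsDiscreteBM.map_eval (hW : IsDiscreteBM W) (t : ℕ) :
    (ℙ : Measure Ω).map (W t) = gaussianReal 0 t := by
  have hae : (fun ω => W t ω - W 0 ω) =ᵐ[ℙ] W t := by
    filter_upwards [hW.init] with ω h
    simp [h]
  rw [← Measure.map_congr hae, hW.incr 0 t t.zero_le]
  simp

lemma IsDiscreteBM.mgf_eval (hW : IsDiscreteBM W) (t : ℕ) (s : ℝ) :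
    mgf (W t) ℙ s = exp (s ^ 2 * t / 2) := by
  rw [mgf_gaussianReal (hW.map_eval t)]
  congr 1
  push_cast
  ring

lemma IsDiscreteBM.integral_exp_mul (hW : IsDiscreteBM W) (s : ℝ) (t : ℕ) :
    ∫ ω, exp (s * W t ω) = exp (s ^ 2 * t / 2) :=
  hW.mgf_eval t s

lemma IsDiscreteBM.integrable_exp_mul (hW : IsDiscreteBM W) (s : ℝ) (t : ℕ) :
    Integrable (fun ω => exp (s * W t ω)) ℙ :=
  (integrable_map_measure (g := fun x => exp (s * x)) (by fun_prop)
    (hW.meas t).aemeasurable).mp (by rw [hW.map_eval]; exact integrable_exp_mul_gaussianReal s)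

lemma IsDiscreteBM.memLp_exp_mul (hW : IsDiscreteBM W) (s : ℝ) (t : ℕ) :
    MemLp (fun ω => exp (s * W t ω)) 2 ℙ := by
  rw [memLp_two_iff_integrable_sq (hW.integrable_exp_mul s t).aestronglyMeasurable]
  convert hW.integrable_exp_mul (2 * s) t using 2 with ω
  rw [sq, ← exp_add]
  ring_nf

noncomputable def gbmCov (σ : ℝ) (W U : ℕ → Ω → ℝ) (k : ℕ) : ℝ :=
  cov[fun ω => exp (σ * W k ω), fun ω => exp (σ * U k ω)]

lemma IsCorrBMPair.integral_exp_mul_exp {r : ℕ → ℝ} (h : IsCorrBMPair r W U) (σ : ℝ) (t : ℕ) :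
    ∫ ω, exp (σ * W t ω) * exp (σ * U t ω) = exp (σ ^ 2 * t * (1 + r t)) := by
  obtain ⟨W₁, -, hW₁, -, hindep, -, hW_eq, -⟩ := h.rep
  have hs : √(1 - r t ^ 2) ^ 2 = 1 - r t ^ 2 :=
    sq_sqrt (sub_nonneg.mpr (sq_le_one_iff_abs_le_one _ |>.mpr (h.bound t)))
  have hae : (fun ω => exp (σ * W t ω) * exp (σ * U t ω)) =ᵐ[ℙ]
      fun ω => exp (σ * (1 + r t) * U t ω) * exp (σ * √(1 - r t ^ 2) * W₁ t ω) := by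
    filter_upwards [hW_eq t] with ω hω
    rw [← exp_add, ← exp_add, hω]
    ring_nf
  have hindep_t : IndepFun (fun ω => exp (σ * (1 + r t) * U t ω))
      (fun ω => exp (σ * √(1 - r t ^ 2) * W₁ t ω)) ℙ :=
    (hindep.comp (φ := fun x : ℕ → ℝ => exp (σ * √(1 - r t ^ 2) * x t))
      (ψ := fun x : ℕ → ℝ => exp (σ * (1 + r t) * x t)) (by fun_prop) (by fun_prop)).symm
  rw [integral_congr_ae hae, hindep_t.integral_fun_mul_eq_mul_integral
      (h.bmY.integrable_exp_mul _ t).aestronglyMeasurable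
      (hW₁.integrable_exp_mul _ t).aestronglyMeasurable,
    h.bmY.integral_exp_mul, hW₁.integral_exp_mul, ← exp_add, mul_pow, mul_pow, hs]
  ring_nf

lemma integral_centered_exp_mul (hW : IsDiscreteBM W) (hU : IsDiscreteBM U) (σ : ℝ) (t : ℕ) :
    ∫ ω, (exp (σ * W t ω) - exp (σ ^ 2 * t / 2)) * (exp (σ * U t ω) - exp (σ ^ 2 * t / 2)) =
      gbmCov σ W U t := by
  simp only [gbmCov, covariance, hW.integral_exp_mul, hU.integral_exp_mul]

variable [IsProbabilityMeasure (ℙ : Measure Ω)]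

lemma gbmCov_eq_integral_sub (hW : IsDiscreteBM W) (hU : IsDiscreteBM U) (σ : ℝ) (t : ℕ) :
    gbmCov σ W U t = (∫ ω, exp (σ * W t ω) * exp (σ * U t ω)) - exp (σ ^ 2 * t) := by
  rw [gbmCov, covariance_eq_sub (hW.memLp_exp_mul σ t) (hU.memLp_exp_mul σ t),
    hW.integral_exp_mul, hU.integral_exp_mul, ← exp_add, add_halves]
  rfl

lemma IsCorrBMPair.gbmCov_eq {r : ℕ → ℝ} (h : IsCorrBMPair r W U) (σ : ℝ) (t : ℕ) :
    gbmCov σ W U t = exp (σ ^ 2 * t * (1 + r t)) - exp (σ ^ 2 * t) := by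
  rw [gbmCov_eq_integral_sub h.bmX h.bmY, h.integral_exp_mul_exp]

lemma IsDiscreteBM.gbmCov_self (hW : IsDiscreteBM W) (σ : ℝ) (t : ℕ) :
    gbmCov σ W W t = exp (2 * σ ^ 2 * t) - exp (σ ^ 2 * t) := by
  rw [gbmCov_eq_integral_sub hW hW]
  simp_rw [← exp_add, ← add_mul]
  rw [hW.integral_exp_mul]
  ring_nf

lemma integrable_centered_exp_mul (hW : IsDiscreteBM W) (hU : IsDiscreteBM U) (σ : ℝ) (t : ℕ) :
    Integrable (fun ω => (exp (σ * W t ω) - exp (σ ^ 2 * t / 2)) *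
      (exp (σ * U t ω) - exp (σ ^ 2 * t / 2))) ℙ :=
  ((hW.memLp_exp_mul σ t).sub (memLp_const _)).integrable_mul
    ((hU.memLp_exp_mul σ t).sub (memLp_const _))

lemma integral_gbmGammaEq3 (hW : IsDiscreteBM W) (hU : IsDiscreteBM U) (σ a b c : ℝ)
    (T t : ℕ) :
    ∫ ω, gbmGammaEq3 σ a b c W U T t ω = exp (-(c * σ ^ 2 * T)) *
      ((∑ k ∈ Icc 1 T, exp (a * σ ^ 2 * k)) * gbmCov σ W U t -
        ∑ k ∈ Icc 1 T, exp (-(b * σ ^ 2 * k)) * gbmCov σ W U k) := by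
  have hint := integrable_centered_exp_mul hW hU σ
  unfold gbmGammaEq3
  rw [integral_const_mul, integral_finsetSum _ fun k _ => ?_]
  · simp_rw [integral_sub ((hint t).const_mul _) ((hint _).const_mul _), integral_const_mul,
      integral_centered_exp_mul hW hU, sum_sub_distrib, sum_mul]
  · exact ((hint t).const_mul _).sub ((hint k).const_mul _)

lemma IsCorrBMPair.abs_gbmCov_le {r : ℕ → ℝ} (h : IsCorrBMPair r W U) (σ : ℝ) (k : ℕ) :
    |gbmCov σ W U k| ≤ exp (2 * σ ^ 2 * k) := by
  have hk : 0 ≤ σ ^ 2 * k := by positivity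
  have hr := (abs_le.mp (h.bound k)).2
  rw [h.gbmCov_eq]
  exact abs_exp_sub_exp_le (by nlinarith) (by linarith)

lemma IsCorrBMPair.gbmCorr_eq {r : ℕ → ℝ} (h : IsCorrBMPair r W U) (σ : ℝ) (t : ℕ) :
    gbmCorr σ r t = gbmCov σ W U t / (exp (2 * σ ^ 2 * t) - exp (σ ^ 2 * t)) := by
  have hnum : exp (σ ^ 2 * t * (1 + r t)) - exp (σ ^ 2 * t) =
      exp (σ ^ 2 * t) * (exp (r t * σ ^ 2 * t) - 1) := by
    rw [mul_sub, ← exp_add, mul_one]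
    ring_nf
  have hden : exp (2 * σ ^ 2 * t) - exp (σ ^ 2 * t) =
      exp (σ ^ 2 * t) * (exp (σ ^ 2 * t) - 1) := by
    rw [mul_sub, ← exp_add, mul_one]
    ring_nf
  rw [h.gbmCov_eq, hnum, hden, mul_div_mul_left _ _ (exp_ne_zero _), gbmCorr]

end GBM

theorem statement10 {Ω : Type*} [MeasureSpace Ω] [IsProbabilityMeasure (ℙ : Measure Ω)]
    (σ : ℝ) (hσ : 0 < σ) (r : ℕ → ℝ) (W U : ℕ → Ω → ℝ) (h : IsCorrBMPair r W U)
    (a b c : ℝ) (ha : 0 < a) (hb : 2 < b) (t : ℕ) (ht : 1 ≤ t) :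
    Tendsto (fun T =>
        (∫ ω, gbmGammaEq3 σ a b c W U T t ω ∂(ℙ : Measure Ω)) /
          Real.sqrt ((∫ ω, gbmGammaEq3 σ a b c W W T t ω ∂(ℙ : Measure Ω)) *
            (∫ ω, gbmGammaEq3 σ a b c U U T t ω ∂(ℙ : Measure Ω))))
      atTop (nhds (gbmCorr σ r t)) := by
  have hbσ : 2 * σ ^ 2 < b * σ ^ 2 := by gcongr
  have hvar : 0 < exp (2 * σ ^ 2 * t) - exp (σ ^ 2 * t) := by
    have : 0 < σ ^ 2 * t := mul_pos (by positivity) (by exact_mod_cast ht)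
    exact sub_pos.mpr (exp_lt_exp.mpr (by linarith))
  simp_rw [integral_gbmGammaEq3 h.bmX h.bmY, integral_gbmGammaEq3 h.bmX h.bmX,
    integral_gbmGammaEq3 h.bmY h.bmY, h.bmX.gbmCov_self, h.bmY.gbmCov_self, h.gbmCorr_eq]
  exact tendsto_div_sqrt_mul_self_of_bounded (fun _ => exp_pos _)
    (tendsto_sum_Icc_exp_mul_atTop (by positivity))
    (fun _ => abs_sum_le_tsum_abs (summable_exp_neg_mul_mul_of_abs_le hbσ (h.abs_gbmCov_le σ)) _)
    (fun _ => abs_sum_le_tsum_abs (summable_exp_neg_mul_mul_of_abs_le hbσ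
      fun k => abs_exp_sub_exp_le le_rfl (by nlinarith)) _) hvar
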